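/- arXiv:1411.3015 — 6 statements merged into one kernel-verified Lean document; each statement's English description precedes it below -/
import Mathlib

section
/- Let P be a ground program over a type α of ground atoms and S a specification. If every atom of S is covered by P w.r.t. S, then S is contained in the greatest fixed point of the immediate consequence operator T_P. -/
/-- The immediate consequence operator of a ground program `P`
(a set of clauses `(B, H)` with body `B` and head `H`). -/
def TP {α : Type*} (P : Set (List α × α)) : Set α →o Set α :=
  ⟨fun I => {H | ∃ B : List α, (B, H) ∈ P ∧ ∀ A ∈ B, A ∈ I},
   by
     intro I J h H hH
     obtain ⟨B, hB, hall⟩ := hH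
     exact ⟨B, hB, fun A hA => h (hall A hA)⟩⟩

/-- The least Herbrand model of a ground program: the least fixed point of `TP P`. -/
def MP {α : Type*} (P : Set (List α × α)) : Set α := OrderHom.lfp (TP P)

/-- `H` is covered by `P` w.r.t. `S`. -/
def Covered {α : Type*} (P : Set (List α × α)) (S : Set α) (H : α) : Prop :=
  ∃ B : List α, (B, H) ∈ P ∧ ∀ A ∈ B, A ∈ S

/-- `H` is recurrently covered by `P` w.r.t. `S` and a level mapping `lvl`. -/
def RecurrentlyCovered {α : Type*} (P : Set (List α × α)) (S : Set α)
    (lvl : α → ℕ) (H : α) : Prop :=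
  ∃ B : List α, (B, H) ∈ P ∧ ∀ A ∈ B, A ∈ S ∧ lvl A < lvl H

/-- `P` is recurrent w.r.t. the level mapping `lvl`. -/
def Recurrent {α : Type*} (P : Set (List α × α)) (lvl : α → ℕ) : Prop :=
  ∀ B H, (B, H) ∈ P → ∀ A ∈ B, lvl A < lvl H

/-- `P` is acceptable w.r.t. the specification `S` and the level mapping `lvl`. -/
def Acceptable {α : Type*} (P : Set (List α × α)) (S : Set α) (lvl : α → ℕ) : Prop :=
  MP P ⊆ S ∧
    ∀ B H, (B, H) ∈ P → ∀ (i : ℕ) (hi : i < B.length),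
      (∀ A ∈ B.take i, A ∈ S) → lvl (B.get ⟨i, hi⟩) < lvl H

theorem semi_completeness {α : Type*} (P : Set (List α × α)) (S : Set α)
    (h : ∀ H ∈ S, Covered P S H) :
    S ⊆ OrderHom.gfp (TP P) := by
  apply OrderHom.le_gfp
  intro H hH
  exact h H hH
end

section
/- Let P be a ground program over a type α of ground atoms, S a specification, and |·| : α → ℕ a level mapping. If every atom of S is recurrently covered by P w.r.t. S and |·|, then P is complete w.r.t. S, i.e. S is contained in the least Herbrand model M_P (the least fixed point of T_P). -/
theorem completeness_recurrently_covered {α : Type*} (P : Set (List α × α)) (S : Set α)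
    (lvl : α → ℕ) (h : ∀ H ∈ S, RecurrentlyCovered P S lvl H) :
    S ⊆ MP P := by
  have key : ∀ n H, H ∈ S → lvl H = n → H ∈ MP P := by
    intro n
    induction n using Nat.strong_induction_on with
    | _ n ih =>
      intro H hH hn
      obtain ⟨B, hBP, hall⟩ := h H hH
      have : H ∈ TP P (MP P) := by
        refine ⟨B, hBP, fun A hA => ?_⟩
        obtain ⟨hAS, hlt⟩ := hall A hA
        exact ih (lvl A) (hn ▸ hlt) A hAS rfl
      rw [MP, ← OrderHom.map_lfp (TP P)]; exact this
  exact fun H hH => key (lvl H) H hH rfl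
end

section
/- Let P be a ground program over a type α of ground atoms and S a specification. If every atom of S is covered by P w.r.t. S and P is recurrent w.r.t. some level mapping |·| : α → ℕ, then P is complete w.r.t. S, i.e. S is contained in the least Herbrand model M_P. -/
theorem completeness_covered_recurrent {α : Type*} (P : Set (List α × α)) (S : Set α)
    (lvl : α → ℕ) (hcov : ∀ H ∈ S, Covered P S H) (hrec : Recurrent P lvl) :
    S ⊆ MP P := by
  intro H hH
  induction' hn : lvl H using Nat.strong_induction_on with n IH generalizing H
  obtain ⟨B, hBP, hBS⟩ := hcov H hH
  have : H ∈ (TP P) (MP P) := by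
    refine ⟨B, hBP, fun A hA => ?_⟩
    exact IH (lvl A) (hn ▸ hrec B H hBP A hA) (hBS A hA) rfl
  rw [MP, ← OrderHom.map_lfp (TP P)]; exact this
end

section
/- Let P be a ground program over a type α of ground atoms and S, S' specifications with S ⊆ S'. If every atom of S is covered by P w.r.t. S and P is acceptable w.r.t. S' and some level mapping |·| : α → ℕ, then P is complete w.r.t. S, i.e. S is contained in the least Herbrand model M_P. -/
theorem completeness_covered_acceptable {α : Type*} (P : Set (List α × α))
    (S S' : Set α) (lvl : α → ℕ) (hSS' : S ⊆ S')
    (hcov : ∀ H ∈ S, Covered P S H) (hacc : Acceptable P S' lvl) :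
    S ⊆ MP P := by
  have key : ∀ n, ∀ H, lvl H < n → H ∈ S → H ∈ MP P := by
    intro n
    induction n with
    | zero => intro H h; omega
    | succ n ih =>
      intro H hH hS
      obtain ⟨B, hBP, hall⟩ := hcov H hS
      have hmem : ∀ A ∈ B, A ∈ MP P := by
        intro A hA
        have hAS := hall A hA
        obtain ⟨i, hi⟩ := List.mem_iff_get.mp hA
        have hlt := hacc.2 B H hBP i.1 i.2
          (fun A' hA' => hSS' (hall A' (List.take_subset _ _ hA')))
        rw [hi] at hlt
        exact ih A (by omega) hAS
      have hfp : H ∈ (TP P) (MP P) := ⟨B, hBP, hmem⟩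
      rw [MP, ← (TP P).map_lfp]
      exact hfp
  intro H hS
  exact key (lvl H + 1) H (by omega) hS
end

section
/- Let P be a ground program over a type α of ground atoms. Then P is acceptable w.r.t. some specification S and some level mapping |·| if and only if P is acceptable in Apt's sense w.r.t. some specification S' and some level mapping |·|', where Apt's sense replaces the correctness requirement M_P ⊆ S' by the requirement that S' is a model of P, i.e. T_P(S') ⊆ S'. In other words, the two definitions of acceptability make the same programs acceptable. -/
/-- `P` is acceptable in Apt's sense: the correctness requirement `MP P ⊆ S` is
replaced by the requirement that `S` is a model of `P`, i.e. `TP P S ⊆ S`. -/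
def AcceptableApt {α : Type*} (P : Set (List α × α)) (S : Set α) (lvl : α → ℕ) : Prop :=
  TP P S ⊆ S ∧
    ∀ B H, (B, H) ∈ P → ∀ (i : ℕ) (hi : i < B.length),
      (∀ A ∈ B.take i, A ∈ S) → lvl (B.get ⟨i, hi⟩) < lvl H

theorem acceptable_iff_acceptableApt {α : Type*} (P : Set (List α × α)) :
    (∃ (S : Set α) (lvl : α → ℕ), Acceptable P S lvl) ↔
      (∃ (S' : Set α) (lvl' : α → ℕ), AcceptableApt P S' lvl') := by
  constructor
  · rintro ⟨S, lvl, hMS, hlvl⟩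
    refine ⟨MP P, lvl, ?_, ?_⟩
    · exact le_of_eq (OrderHom.map_lfp (TP P))
    · intro B H hBH i hi hpre
      exact hlvl B H hBH i hi fun A hA => hMS (hpre A hA)
  · rintro ⟨S, lvl, hTS, hlvl⟩
    exact ⟨S, lvl, OrderHom.lfp_le (TP P) hTS, hlvl⟩
end

section
/- Consider the ground program SPLIT over atoms Term × Term × Term (read (t, t₁, t₂) as s(t, t₁, t₂)) consisting of the clause ([], (nil, nil, nil)) and all clauses ([(xs, zs, ys)], (cons x xs, cons x ys, zs)) for x, xs, ys, zs : Term. Then SPLIT is correct w.r.t. the specification S = { (t, t₁, t₂) | t, t₁, t₂ are list terms and 0 ≤ (length of t₁) − (length of t₂) ≤ 1 }; that is, the least Herbrand model of SPLIT is contained in S. -/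
/-- The Herbrand universe: terms built from `nil`, `cons` and a constant `c`. -/
inductive Term : Type
  | nil : Term
  | cons : Term → Term → Term
  | c : Term

/-- `t` is a list term, i.e. of the form `cons t₁ (cons t₂ (… nil))`. -/
def IsList : Term → Prop
  | Term.nil => True
  | Term.cons _ t => IsList t
  | Term.c => False

/-- The length of (the list represented by) a term. -/
def len : Term → ℕ
  | Term.cons _ t => 1 + len t
  | _ => 0

/-- The program SPLIT. -/
def SPLIT : Set (List (Term × Term × Term) × (Term × Term × Term)) :=
  {([], (Term.nil, Term.nil, Term.nil))} ∪
    {C | ∃ x xs ys zs : Term,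
      C = ([(xs, zs, ys)], (Term.cons x xs, Term.cons x ys, zs))}

theorem split_correct :
    MP SPLIT ⊆
      {a : Term × Term × Term |
        IsList a.1 ∧ IsList a.2.1 ∧ IsList a.2.2 ∧
          0 ≤ (len a.2.1 : ℤ) - (len a.2.2 : ℤ) ∧
            (len a.2.1 : ℤ) - (len a.2.2 : ℤ) ≤ 1} := by
  apply OrderHom.lfp_le
  intro H hH
  obtain ⟨B, hB, hall⟩ := hH
  rcases hB with h1 | ⟨x, xs, ys, zs, h2⟩
  · rw [Set.mem_singleton_iff, Prod.mk.injEq] at h1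
    obtain ⟨hb, hh⟩ := h1
    subst hh
    simp [Set.mem_setOf_eq, IsList, len]
  · rw [Prod.mk.injEq] at h2
    obtain ⟨hb, hh⟩ := h2
    subst hb; subst hh
    have := hall (xs, zs, ys) (by simp)
    obtain ⟨i1, i2, i3, i4, i5⟩ := this
    refine ⟨i1, i3, i2, ?_, ?_⟩ <;> simp [len] at * <;> omega
end
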